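/- Let i = 2m ≥ 0 be even. Then {x ∈ B_i : h(x,y) + σ(h(x,y)) ∈ 2^{m+2}A for all y ∈ B_i} = Y_i. Consequently Z_i/πB_i is the radical of the κ-valued quadratic form x ↦ 2^{−(m+1)}h(x,x) mod 2 on B_i/πB_i, where in characteristic 2 the radical of a quadratic form consists of the vectors lying in the radical of its polar form on which the quadratic form vanishes. -/

import Mathlib

/-- `A_i = {x ∈ L : h(x,L) ⊆ π^i B}`. -/
def AiSet {B L : Type*} [CommRing B] [AddCommGroup L] [Module B L]
    (π : B) (h : L → L → B) (i : ℕ) : Set L :=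
  {x | ∀ w : L, π ^ i ∣ h x w}

/-- `B_i = {x ∈ A_i : h(x,x) ∈ 2^{m+1} A}` where `m = ⌈i/2⌉`. -/
def BiSet (A : Type*) {B L : Type*} [CommRing A] [CommRing B] [Algebra A B]
    [AddCommGroup L] [Module B L] (π : B) (h : L → L → B) (i : ℕ) : Set L :=
  {x | x ∈ AiSet π h i ∧ ∃ a : A, h x x = algebraMap A B (2 ^ ((i + 1) / 2 + 1) * a)}

/-- `X_i = {x ∈ A_i : h(x,A_i) ⊆ π^{i+1} B}`. -/
def XiSet {B L : Type*} [CommRing B] [AddCommGroup L] [Module B L]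
    (π : B) (h : L → L → B) (i : ℕ) : Set L :=
  {x | x ∈ AiSet π h i ∧ ∀ w ∈ AiSet π h i, π ^ (i + 1) ∣ h x w}

/-- `Y_i = {x ∈ B_i : h(x,B_i) ⊆ π^{i+1} B}`. -/
def YiSet (A : Type*) {B L : Type*} [CommRing A] [CommRing B] [Algebra A B]
    [AddCommGroup L] [Module B L] (π : B) (h : L → L → B) (i : ℕ) : Set L :=
  {x | x ∈ BiSet A π h i ∧ ∀ w ∈ BiSet A π h i, π ^ (i + 1) ∣ h x w}

/-- `Z_i = {x ∈ Y_i : h(x,x) ∈ 2^{m+2} A}` (used for `i = 2m` even). -/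
def ZiSet (A : Type*) {B L : Type*} [CommRing A] [CommRing B] [Algebra A B]
    [AddCommGroup L] [Module B L] (π : B) (h : L → L → B) (i : ℕ) : Set L :=
  {x | x ∈ YiSet A π h i ∧ ∃ a : A, h x x = algebraMap A B (2 ^ ((i + 1) / 2 + 2) * a)}

/-- `S_i = {w ∈ A_i : (ξ^{-m} h(v,w))² - ξ^{-m} h(v,v) ∈ πB for all v ∈ A_i}` for `i = 2m`
even, expressed integrally after multiplying through by the unit multiple `ξ^{2m}` of
`π^{4m}`: namely `h(v,w)² - ξ^m h(v,v) ∈ π^{4m+1} B`, where `ξ = πσ(π) = -π²`. -/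
def SiSet {B L : Type*} [CommRing B] [AddCommGroup L] [Module B L]
    (π : B) (h : L → L → B) (i : ℕ) : Set L :=
  {w | w ∈ AiSet π h i ∧ ∀ v ∈ AiSet π h i,
    π ^ (4 * ((i + 1) / 2) + 1) ∣ ((h v w) ^ 2 - (-(π ^ 2)) ^ ((i + 1) / 2) * h v v)}

/-- `W_i = X_i + ⟨S_i⟩` for even `i`, and `W_i = X_i` for odd `i`. -/
def WiSet {B L : Type*} [CommRing B] [AddCommGroup L] [Module B L]
    (π : B) (h : L → L → B) (i : ℕ) : Set L :=
  if Even i then (Submodule.span B (XiSet π h i ∪ SiSet π h i) : Set L)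
  else XiSet π h i

/-!
Write `b ∈ B` as `α + βπ` with `α, β ∈ A`. Then `b + σ b = 2α` and `πb + σ(πb) = 2π²β = 4δβ`,
so the two traces lie in `2^{m+2}A` exactly when `2^{m+1} ∣ α` and `2^m ∣ β`, that is, when
`π^{2m+1} ∣ b`. Since `B_i` is stable under multiplication by `π` and `h` is linear in the second
variable, the trace condition on `h(x, B_i)` is therefore the condition `h(x, B_i) ⊆ π^{i+1}B`
defining `Y_i`. The second statement follows from the polar identity
`h(x+y, x+y) - h(x,x) - h(y,y) = h(x,y) + σ(h(x,y))`.
-/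

section QuadraticExtension

variable {A B : Type*} [CommRing A] [CommRing B] [Algebra A B] {π : B} {σ : B ≃ₐ[A] B} {δ : A}

lemma algebraMap_injective_of_existsUnique_repr
    (hrepr : ∀ b : B, ∃! p : A × A, b = algebraMap A B p.1 + algebraMap A B p.2 * π) :
    Function.Injective (algebraMap A B) := by
  intro c d hcd
  obtain ⟨p, -, hp⟩ := hrepr (algebraMap A B c)
  have hc := hp (c, 0) (by simp)
  have hd := hp (d, 0) (by simp [hcd])
  simpa using congrArg Prod.fst (hc.trans hd.symm)

lemma sq_dvd_algebraMap_two (hδ : IsUnit δ) (hπ : π ^ 2 = algebraMap A B (2 * δ)) :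
    π ^ 2 ∣ algebraMap A B 2 := by
  obtain ⟨u, hu⟩ := hδ.exists_right_inv
  exact ⟨algebraMap A B u, by rw [hπ, ← map_mul, mul_assoc, hu, mul_one]⟩

lemma pow_dvd_algebraMap_two_pow (hδ : IsUnit δ) (hπ : π ^ 2 = algebraMap A B (2 * δ)) (k : ℕ) :
    π ^ (2 * k) ∣ algebraMap A B (2 ^ k) := by
  rw [pow_mul, map_pow]
  exact pow_dvd_pow_of_dvd (sq_dvd_algebraMap_two hδ hπ) k

lemma add_apply_eq_of_repr (hσπ : σ π = -π) {b : B} {α β : A}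
    (hb : b = algebraMap A B α + algebraMap A B β * π) :
    b + σ b = algebraMap A B (2 * α) := by
  rw [hb, map_add, map_mul, σ.commutes, σ.commutes, hσπ, map_mul, map_ofNat]
  ring

lemma mul_add_apply_mul_eq_of_repr (hπ : π ^ 2 = algebraMap A B (2 * δ)) (hσπ : σ π = -π)
    {b : B} {α β : A} (hb : b = algebraMap A B α + algebraMap A B β * π) :
    π * b + σ (π * b) = algebraMap A B (2 ^ 2 * (δ * β)) := by
  have hπb : π * b = algebraMap A B (2 * δ * β) + algebraMap A B α * π := by
    rw [hb, map_mul, ← hπ]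
    ring
  rw [add_apply_eq_of_repr hσπ hπb]
  ring_nf

lemma trace_mem_of_pow_dvd
    (hrepr : ∀ b : B, ∃ p : A × A, b = algebraMap A B p.1 + algebraMap A B p.2 * π)
    (hπ : π ^ 2 = algebraMap A B (2 * δ)) (hσπ : σ π = -π) (n : ℕ) {b : B}
    (hb : π ^ (2 * n + 1) ∣ b) :
    ∃ a : A, b + σ b = algebraMap A B (2 ^ (n + 2) * a) := by
  obtain ⟨c, rfl⟩ := hb
  obtain ⟨⟨α, β⟩, hc⟩ := hrepr c
  refine ⟨δ ^ (n + 1) * β, ?_⟩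
  have hσ_even : σ (π ^ (2 * n)) = π ^ (2 * n) := by
    rw [map_pow, hσπ, (even_two_mul n).neg_pow]
  calc π ^ (2 * n + 1) * c + σ (π ^ (2 * n + 1) * c)
      = π ^ (2 * n) * (π * c + σ (π * c)) := by
        rw [pow_succ, mul_assoc, map_mul, hσ_even]
        ring
    _ = algebraMap A B ((2 * δ) ^ n * (2 ^ 2 * (δ * β))) := by
        rw [mul_add_apply_mul_eq_of_repr hπ hσπ hc, pow_mul, hπ, ← map_pow, ← map_mul]
    _ = algebraMap A B (2 ^ (n + 2) * (δ ^ (n + 1) * β)) := by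
        congr 1
        ring

lemma pow_dvd_of_trace_mem [IsDomain A] [CharZero A]
    (hrepr : ∀ b : B, ∃! p : A × A, b = algebraMap A B p.1 + algebraMap A B p.2 * π)
    (hδ : IsUnit δ) (hπ : π ^ 2 = algebraMap A B (2 * δ)) (hσπ : σ π = -π) (n : ℕ) {b : B}
    (htr : ∃ a : A, b + σ b = algebraMap A B (2 ^ (n + 2) * a))
    (htrπ : ∃ a : A, π * b + σ (π * b) = algebraMap A B (2 ^ (n + 2) * a)) :
    π ^ (2 * n + 1) ∣ b := by
  have hinj := algebraMap_injective_of_existsUnique_repr hrepr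
  obtain ⟨⟨α, β⟩, hb, -⟩ := hrepr b
  obtain ⟨a₀, ha₀⟩ := htr
  obtain ⟨a₁, ha₁⟩ := htrπ
  have hα : α = 2 ^ (n + 1) * a₀ := by
    have e := hinj ((add_apply_eq_of_repr hσπ hb).symm.trans ha₀)
    exact mul_left_cancel₀ two_ne_zero (by rw [e]; ring)
  have hδβ : δ * β = 2 ^ n * a₁ := by
    have e := hinj ((mul_add_apply_mul_eq_of_repr hπ hσπ hb).symm.trans ha₁)
    exact mul_left_cancel₀ (pow_ne_zero 2 two_ne_zero) (by rw [e]; ring)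
  have hdvdα : π ^ (2 * n + 1) ∣ algebraMap A B α := by
    rw [hα, map_mul]
    exact ((pow_dvd_pow π (by omega)).trans
      (pow_dvd_algebraMap_two_pow hδ hπ (n + 1))).mul_right _
  have hdvdβ : π ^ (2 * n) ∣ algebraMap A B β := by
    rw [← (hδ.map (algebraMap A B)).dvd_mul_left, ← map_mul, hδβ, map_mul]
    exact (pow_dvd_algebraMap_two_pow hδ hπ n).mul_right _
  rw [hb]
  exact hdvdα.add (pow_succ π (2 * n) ▸ mul_dvd_mul_right hdvdβ π)

end QuadraticExtension

section HermitianForm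

variable {A B L : Type*} [CommRing A] [CommRing B] [Algebra A B] [AddCommGroup L]
  {π : B} {σ : B ≃ₐ[A] B} {δ : A} {h : L → L → B}

lemma apply_add_add_sub_sub (hadd : ∀ x y z : L, h (x + y) z = h x z + h y z)
    (hsymm : ∀ v w : L, h w v = σ (h v w)) (v w : L) :
    h (v + w) (v + w) - h v v - h w w = h v w + σ (h v w) := by
  have hadd_right : ∀ z x y : L, h z (x + y) = h z x + h z y := fun z x y => by
    rw [hsymm, hadd, map_add, ← hsymm, ← hsymm]
  rw [hadd, hadd_right, hadd_right, hsymm v w]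
  ring

variable [Module B L]

lemma apply_smul_right (hsmul : ∀ (a b : B) (v w : L), h (a • v) (b • w) = σ a * b * h v w)
    (b : B) (v w : L) : h v (b • w) = b * h v w := by
  simpa using hsmul 1 b v w

lemma smul_mem_BiSet (hπ : π ^ 2 = algebraMap A B (2 * δ)) (hσπ : σ π = -π)
    (hsmul : ∀ (a b : B) (v w : L), h (a • v) (b • w) = σ a * b * h v w) {i : ℕ} {y : L}
    (hy : y ∈ BiSet A π h i) : π • y ∈ BiSet A π h i := by
  obtain ⟨hyA, a, ha⟩ := hy
  refine ⟨fun w => ?_, -(2 * δ * a), ?_⟩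
  · have hπy : h (π • y) w = -π * h y w := by simpa [hσπ] using hsmul π 1 y w
    rw [hπy]
    exact (hyA w).mul_left _
  · rw [hsmul, hσπ, ha, neg_mul, ← sq, hπ, ← map_neg, ← map_mul]
    congr 1
    ring

lemma mem_YiSet_iff_trace [IsDomain A] [CharZero A]
    (hrepr : ∀ b : B, ∃! p : A × A, b = algebraMap A B p.1 + algebraMap A B p.2 * π)
    (hδ : IsUnit δ) (hπ : π ^ 2 = algebraMap A B (2 * δ)) (hσπ : σ π = -π)
    (hsmul : ∀ (a b : B) (v w : L), h (a • v) (b • w) = σ a * b * h v w) (m : ℕ) {x : L}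
    (hx : x ∈ BiSet A π h (2 * m)) :
    x ∈ YiSet A π h (2 * m) ↔ ∀ y ∈ BiSet A π h (2 * m), ∃ a : A,
      h x y + σ (h x y) = algebraMap A B (2 ^ (m + 2) * a) := by
  refine ⟨fun hY y hy => ?_, fun htr => ⟨hx, fun y hy => ?_⟩⟩
  · exact trace_mem_of_pow_dvd (fun b => (hrepr b).exists) hπ hσπ m (hY.2 y hy)
  · refine pow_dvd_of_trace_mem hrepr hδ hπ hσπ m (htr y hy) ?_
    rw [← apply_smul_right hsmul]
    exact htr _ (smul_mem_BiSet hπ hσπ hsmul hy)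

end HermitianForm

theorem Yi_is_radical_of_polar_general
    {A : Type*} [CommRing A] [IsDomain A] [CharZero A]
    (δ : A) (hδunit : IsUnit δ)
    {B : Type*} [CommRing B] [Algebra A B]
    (π : B) (hπ : π ^ 2 = algebraMap A B (2 * δ))
    (σ : B ≃ₐ[A] B) (hσπ : σ π = -π)
    (hBfree : ∀ b : B, ∃! p : A × A, b = algebraMap A B p.1 + algebraMap A B p.2 * π)
    {L : Type*} [AddCommGroup L] [Module B L]
    (h : L → L → B)
    (hadd : ∀ x y z : L, h (x + y) z = h x z + h y z)
    (hsmul : ∀ (a b : B) (v w : L), h (a • v) (b • w) = σ a * b * h v w)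
    (hsymm : ∀ v w : L, h w v = σ (h v w))
    (i : ℕ) (hi : Even i) :
    {x ∈ BiSet A π h i | ∀ y ∈ BiSet A π h i, ∃ a : A,
        h x y + σ (h x y) = algebraMap A B (2 ^ ((i + 1) / 2 + 2) * a)}
      = YiSet A π h i ∧
    (∀ x ∈ BiSet A π h i,
      (x ∈ ZiSet A π h i ↔
        ((∀ y ∈ BiSet A π h i, ∃ a : A,
            h (x + y) (x + y) - h x x - h y y = algebraMap A B (2 ^ ((i + 1) / 2 + 2) * a)) ∧
          ∃ a : A, h x x = algebraMap A B (2 ^ ((i + 1) / 2 + 2) * a)))) := by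
  obtain ⟨m, rfl⟩ := even_iff_two_dvd.mp hi
  have hm : (2 * m + 1) / 2 = m := by omega
  have hY := fun x => mem_YiSet_iff_trace (x := x) hBfree hδunit hπ hσπ hsmul m
  simp only [hm, apply_add_add_sub_sub hadd hsymm]
  refine ⟨?_, fun x hx => ?_⟩
  · ext x
    exact ⟨fun ⟨hx, htr⟩ => (hY x hx).mpr htr, fun hx => ⟨hx.1, (hY x hx.1).mp hx⟩⟩
  · rw [ZiSet, Set.mem_ofPred_eq, hY x hx, hm]

/-- for even `i = 2m`, the set of `x ∈ B_i` with
`h(x,y) + σ(h(x,y)) ∈ 2^{m+2}A` for all `y ∈ B_i` equals `Y_i`; consequently `Z_i/πB_i` is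
the radical of the quadratic form `x ↦ 2^{-(m+1)}h(x,x) mod 2` on `B_i/πB_i` (the vectors in
the radical of its polar form on which the quadratic form vanishes). -/
theorem Yi_is_radical_of_polar
    {A : Type*} [CommRing A] [IsDomain A] [IsDiscreteValuationRing A] [CharZero A]
    (hmax : IsLocalRing.maximalIdeal A = Ideal.span {2})
    [IsAdicComplete (IsLocalRing.maximalIdeal A) A]
    [CharP (IsLocalRing.ResidueField A) 2]
    [PerfectRing (IsLocalRing.ResidueField A) 2]
    (δ : A) (hδunit : IsUnit δ) (hδ1 : (2 : A) ∣ (δ - 1))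
    {B : Type*} [CommRing B] [IsDomain B] [Algebra A B]
    (π : B) (hπ : π ^ 2 = algebraMap A B (2 * δ))
    (σ : B ≃ₐ[A] B) (hσπ : σ π = -π) (hσinv : ∀ b : B, σ (σ b) = b)
    (hBfree : ∀ b : B, ∃! p : A × A, b = algebraMap A B p.1 + algebraMap A B p.2 * π)
    {L : Type*} [AddCommGroup L] [Module B L] [Module.Free B L] [Module.Finite B L]
    (h : L → L → B)
    (hadd : ∀ x y z : L, h (x + y) z = h x z + h y z)
    (hsmul : ∀ (a b : B) (v w : L), h (a • v) (b • w) = σ a * b * h v w)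
    (hsymm : ∀ v w : L, h w v = σ (h v w))
    (hnd : ∀ v : L, (∀ w : L, h v w = 0) → v = 0)
    (i : ℕ) (hi : Even i) :
    {x ∈ BiSet A π h i | ∀ y ∈ BiSet A π h i, ∃ a : A,
        h x y + σ (h x y) = algebraMap A B (2 ^ ((i + 1) / 2 + 2) * a)}
      = YiSet A π h i ∧
    (∀ x ∈ BiSet A π h i,
      (x ∈ ZiSet A π h i ↔
        ((∀ y ∈ BiSet A π h i, ∃ a : A,
            h (x + y) (x + y) - h x x - h y y = algebraMap A B (2 ^ ((i + 1) / 2 + 2) * a)) ∧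
          ∃ a : A, h x x = algebraMap A B (2 ^ ((i + 1) / 2 + 2) * a)))) :=
  Yi_is_radical_of_polar_general δ hδunit π hπ σ hσπ hBfree h hadd hsmul hsymm i hi
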